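/- There do not exist a continuous 1-periodic function p : ℝ → ℂ and a continuous function c : [0,∞) → ℂ with c(t) → 0 as t → ∞ such that sin(√t) = p(t) + c(t) for all t ≥ 0. -/

import Mathlib

open Filter Topology Set

/-!
The increments `sin √(t + s) - sin √t` tend to `0` as `t → ∞`, because `√(t + s) - √t` does.
Subtracting `c`, the increments `p (t + s) - p t` also tend to `0`; being `1`-periodic in `t`,
they vanish, so `p` is constant. Then `sin √t`, and hence `sin`, would converge at `∞`, which a
nonconstant periodic function cannot do.
-/

theorem Function.Periodic.eq_of_tendsto_atTop {α X : Type*} [Field α] [LinearOrder α]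
    [IsStrictOrderedRing α] [Archimedean α] [TopologicalSpace X] [T2Space X] {f : α → X}
    {c : α} {a : X} (hf : Function.Periodic f c) (hc : 0 < c) (h : Tendsto f atTop (𝓝 a))
    (x : α) : f x = a := by
  have hshift : Tendsto (fun n : ℕ => x + n * c) atTop atTop :=
    tendsto_atTop_add_const_left _ x (tendsto_natCast_atTop_atTop.atTop_mul_const hc)
  refine tendsto_nhds_unique (tendsto_const_nhds.congr fun n => ?_) (h.comp hshift)
  exact ((hf.nat_mul n) x).symm

theorem Real.not_tendsto_sin_atTop (a : ℝ) : ¬ Tendsto Real.sin atTop (𝓝 a) := fun h => by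
  have h₀ := Real.sin_periodic.eq_of_tendsto_atTop Real.two_pi_pos h 0
  have h₁ := Real.sin_periodic.eq_of_tendsto_atTop Real.two_pi_pos h (Real.pi / 2)
  rw [Real.sin_zero] at h₀
  rw [Real.sin_pi_div_two] at h₁
  linarith

theorem tendsto_sqrt_add_sub_sqrt_atTop (s : ℝ) :
    Tendsto (fun t => √(t + s) - √t) atTop (𝓝 0) := by
  have hbound : Tendsto (fun t => |s| / √t) atTop (𝓝 0) :=
    tendsto_const_nhds.div_atTop Real.tendsto_sqrt_atTop
  refine squeeze_zero_norm' ?_ hbound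
  filter_upwards [eventually_gt_atTop 0, eventually_ge_atTop (-s)] with t ht hts
  have hprod : (√(t + s) - √t) * (√(t + s) + √t) = s := by
    nlinarith [Real.sq_sqrt ht.le, Real.sq_sqrt (neg_le_iff_add_nonneg.mp hts)]
  rw [Real.norm_eq_abs, le_div_iff₀ (Real.sqrt_pos.mpr ht)]
  calc |√(t + s) - √t| * √t ≤ |√(t + s) - √t| * (√(t + s) + √t) := by
        gcongr
        exact le_add_of_nonneg_left (Real.sqrt_nonneg _)
    _ = |s| := by rw [← abs_of_nonneg (by positivity : 0 ≤ √(t + s) + √t), ← abs_mul, hprod]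

theorem tendsto_sin_sqrt_add_sub_sin_sqrt_atTop (s : ℝ) :
    Tendsto (fun t => Real.sin √(t + s) - Real.sin √t) atTop (𝓝 0) :=
  squeeze_zero_norm (fun t => Real.abs_sin_sub_sin_le _ _)
    (by simpa using (tendsto_sqrt_add_sub_sqrt_atTop s).abs)

theorem Function.Periodic.eq_of_eventuallyEq_add {E : Type*} [NormedAddCommGroup E]
    {p c f : ℝ → E} {T : ℝ} (hp : Function.Periodic p T) (hT : 0 < T)
    (hc : Tendsto c atTop (𝓝 0)) (hf : ∀ s, Tendsto (fun t => f (t + s) - f t) atTop (𝓝 0))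
    (hfpc : f =ᶠ[atTop] p + c) (x y : ℝ) : p x = p y := by
  have hshift (s : ℝ) : Tendsto (fun t => p (t + s) - p t) atTop (𝓝 0) := by
    have hcs : Tendsto (fun t => c (t + s)) atTop (𝓝 0) :=
      hc.comp (tendsto_atTop_add_const_right _ s tendsto_id)
    have hlim := (hf s).sub (hcs.sub hc)
    rw [sub_zero, sub_zero] at hlim
    refine hlim.congr' ?_
    filter_upwards [hfpc, tendsto_atTop_add_const_right _ s tendsto_id hfpc] with t ht hts
    simp only [Pi.add_apply, mem_preimage, id] at ht hts
    rw [ht, hts]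
    abel
  have hperiodic : Function.Periodic (fun t => p (t + (x - y)) - p t) T := fun t => by
    simp only [add_right_comm t T, hp _]
  have := hperiodic.eq_of_tendsto_atTop hT (hshift (x - y)) y
  rwa [add_sub_cancel, sub_eq_zero] at this

/-- There is no decomposition `sin √t = p(t) + c(t)` on `[0,∞)` with `p : ℝ → ℂ`
continuous and `1`-periodic and `c` continuous on `[0,∞)` tending to `0` at `∞`. -/
theorem stmt17 :
    ¬ ∃ (p : ℝ → ℂ) (c : ℝ → ℂ), Continuous p ∧ (∀ t : ℝ, p (t + 1) = p t) ∧
      ContinuousOn c (Ici (0:ℝ)) ∧ Tendsto c atTop (𝓝 (0:ℂ)) ∧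
      ∀ t : ℝ, 0 ≤ t → (Real.sin (Real.sqrt t) : ℂ) = p t + c t := by
  rintro ⟨p, c, -, hp, -, hc, hsin⟩
  have hfpc : (fun t => (Real.sin √t : ℂ)) =ᶠ[atTop] p + c := eventually_atTop.mpr ⟨0, hsin⟩
  have hconst (t : ℝ) : p t = p 0 := by
    refine Function.Periodic.eq_of_eventuallyEq_add hp one_pos hc (fun s => ?_) hfpc t 0
    simpa only [Function.comp_def, Complex.ofReal_sub, Complex.ofReal_zero] using
      (Complex.continuous_ofReal.tendsto 0).comp (tendsto_sin_sqrt_add_sub_sin_sqrt_atTop s)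
  have hlim : Tendsto (fun t => (Real.sin √t : ℂ)) atTop (𝓝 (p 0)) := by
    have hshifted : Tendsto (fun t => p 0 + c t) atTop (𝓝 (p 0)) := by
      simpa using hc.const_add (p 0)
    refine hshifted.congr' ?_
    filter_upwards [hfpc] with t ht
    rw [ht, Pi.add_apply, hconst t]
  have hre := (Complex.continuous_re.tendsto _).comp hlim
  simp only [Function.comp_def, Complex.ofReal_re] at hre
  have hsin_lim : Tendsto Real.sin (map (√·) atTop) (𝓝 (p 0).re) := tendsto_map'_iff.mpr hre
  rw [Real.map_sqrt_atTop] at hsin_lim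
  exact Real.not_tendsto_sin_atTop _ hsin_lim
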